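/- arXiv:gr-qc/0610127 — 4 statements merged into one kernel-verified Lean document; each statement's English description precedes it below -/
import Mathlib

section
/- Let θ : (-T, 0] → ℝ be differentiable with θ'(t) ≤ -θ(t)²/3 and θ(0) ≥ b > 0. Then T ≤ 3/b; i.e., the expansion diverges to +∞ within proper time 3/b to the past. -/
/-!
Since `θ' ≤ -θ²/3 ≤ 0`, the function `θ` decreases, so `θ ≥ θ 0 ≥ b > 0` on the whole interval.
Positivity makes `1/θ` differentiable with `(1/θ)' = -θ'/θ² ≥ 1/3`, hence
`0 < 1/θ(t) ≤ 1/θ(0) + t/3 ≤ 1/b + t/3` for `-T < t ≤ 0`, which forces `T ≤ 3/b`.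
-/

open Set

lemma monotoneOn_of_forall_hasDerivAt_nonneg {D : Set ℝ} (hD : Convex ℝ D) {f f' : ℝ → ℝ}
    (hf : ∀ x ∈ D, HasDerivAt f (f' x) x) (hf' : ∀ x ∈ D, 0 ≤ f' x) : MonotoneOn f D :=
  monotoneOn_of_hasDerivWithinAt_nonneg hD
    (fun x hx ↦ (hf x hx).continuousAt.continuousWithinAt)
    (fun x hx ↦ (hf x (interior_subset hx)).hasDerivWithinAt)
    (fun x hx ↦ hf' x (interior_subset hx))

lemma antitoneOn_of_forall_hasDerivAt_nonpos {D : Set ℝ} (hD : Convex ℝ D) {f f' : ℝ → ℝ}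
    (hf : ∀ x ∈ D, HasDerivAt f (f' x) x) (hf' : ∀ x ∈ D, f' x ≤ 0) : AntitoneOn f D :=
  antitoneOn_of_hasDerivWithinAt_nonpos hD
    (fun x hx ↦ (hf x hx).continuousAt.continuousWithinAt)
    (fun x hx ↦ (hf x (interior_subset hx)).hasDerivWithinAt)
    (fun x hx ↦ hf' x (interior_subset hx))

section Riccati

variable {D : Set ℝ} {θ : ℝ → ℝ} {k : ℝ}

lemma antitoneOn_of_deriv_le_neg_sq_div (hD : Convex ℝ D)
    (hdiff : ∀ t ∈ D, DifferentiableAt ℝ θ t) (hray : ∀ t ∈ D, deriv θ t ≤ -θ t ^ 2 / k)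
    (hk : 0 ≤ k) : AntitoneOn θ D :=
  antitoneOn_of_forall_hasDerivAt_nonpos hD (fun t ht ↦ (hdiff t ht).hasDerivAt) fun t ht ↦
    (hray t ht).trans <| div_nonpos_of_nonpos_of_nonneg (neg_nonpos.2 (sq_nonneg _)) hk

lemma monotoneOn_inv_sub_div_of_deriv_le_neg_sq_div (hD : Convex ℝ D)
    (hdiff : ∀ t ∈ D, DifferentiableAt ℝ θ t) (hray : ∀ t ∈ D, deriv θ t ≤ -θ t ^ 2 / k)
    (hne : ∀ t ∈ D, θ t ≠ 0) : MonotoneOn (fun t ↦ (θ t)⁻¹ - t / k) D := by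
  refine monotoneOn_of_forall_hasDerivAt_nonneg hD
    (fun t ht ↦ ((hdiff t ht).hasDerivAt.inv (hne t ht)).sub ((hasDerivAt_id t).div_const k))
    fun t ht ↦ ?_
  have hsq : 0 < θ t ^ 2 := sq_pos_of_ne_zero (hne t ht)
  have hinv_deriv : 1 / k ≤ -deriv θ t / θ t ^ 2 := by
    rw [le_div_iff₀ hsq, div_mul_eq_mul_div, one_mul]
    linarith [hray t ht, neg_div k (θ t ^ 2)]
  simpa using hinv_deriv

end Riccati

/-- past focusing lemma. If `θ` is differentiable on `(-T,0]` with
`θ' ≤ -θ²/3` there, and `θ 0 ≥ b > 0`, then `T ≤ 3/b`. -/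
theorem focusing_past (θ : ℝ → ℝ) (T b : ℝ)
    (hdiff : ∀ t ∈ Set.Ioc (-T) (0 : ℝ), DifferentiableAt ℝ θ t)
    (hray : ∀ t ∈ Set.Ioc (-T) (0 : ℝ), deriv θ t ≤ -(θ t) ^ 2 / 3)
    (hb : 0 < b) (h0 : b ≤ θ 0) :
    T ≤ 3 / b := by
  by_contra! hT
  have h0mem : (0 : ℝ) ∈ Ioc (-T) 0 := ⟨by linarith [div_pos three_pos hb], le_rfl⟩
  have hθ_ge : ∀ t ∈ Ioc (-T) (0 : ℝ), b ≤ θ t := fun t ht ↦ h0.trans <|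
    antitoneOn_of_deriv_le_neg_sq_div (convex_Ioc _ _) hdiff hray zero_le_three ht h0mem ht.2
  have hmono := monotoneOn_inv_sub_div_of_deriv_le_neg_sq_div (convex_Ioc _ _) hdiff hray
    fun t ht ↦ (hb.trans_le (hθ_ge t ht)).ne'
  set t := -(T + 3 / b) / 2 with ht
  have htmem : t ∈ Ioc (-T) 0 := ⟨by linarith, by linarith [div_pos three_pos hb]⟩
  have hinv_t : 0 < (θ t)⁻¹ := inv_pos.2 (hb.trans_le (hθ_ge t htmem))
  have hinv_0 : (θ 0)⁻¹ ≤ b⁻¹ := inv_anti₀ hb h0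
  have hcmp := hmono htmem h0mem htmem.2
  simp only [zero_div, sub_zero] at hcmp
  linarith [div_eq_mul_inv 3 b]
end

section
/- Let f : ℝ³ → ℝ be given in cylindrical-type coordinates by f(ρ) = c / cosh⁴(3aρ) for constants a, c > 0, integrated against the volume element of the t = T slice of the metric (2), whose volume density is proportional to cosh⁴(aT)·cosh^{4/3}(3aρ)·sinh(3aρ). Then the spatial average over the slice vanishes: lim_{R→∞} (∫₀^R f(ρ)·cosh^{4/3}(3aρ)·sinh(3aρ) dρ) / (∫₀^R cosh^{4/3}(3aρ)·sinh(3aρ) dρ) = 0. -/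
/-! Both integrals have the elementary antiderivative `cosh^{p+1}(bρ) / (b (p+1))`. Against the
energy density the exponent is `p = 4/3 - 4 < -1`, so the numerator converges, while for the bare
volume weight `p = 4/3 > -1` and the denominator grows without bound. -/

open Real Filter Topology intervalIntegral

namespace Real

theorem tendsto_cosh_atTop : Tendsto cosh atTop atTop :=
  tendsto_atTop_mono (fun x => by rw [cosh_eq]; linarith [exp_pos (-x)])
    (tendsto_exp_atTop.atTop_div_const two_pos)

theorem integral_cosh_rpow_mul_sinh {b p : ℝ} (hb : b ≠ 0) (hp : p ≠ -1) (R : ℝ) :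
    ∫ x in (0:ℝ)..R, cosh (b * x) ^ p * sinh (b * x) =
      (cosh (b * R) ^ (p + 1) - 1) / (b * (p + 1)) := by
  have hp1 : p + 1 ≠ 0 := by contrapose! hp; linarith
  have hderiv : ∀ x ∈ Set.uIcc (0:ℝ) R, HasDerivAt
      (fun x => cosh (b * x) ^ (p + 1) / (b * (p + 1)))
      (cosh (b * x) ^ p * sinh (b * x)) x := by
    intro x _
    have hcosh := (hasDerivAt_cosh (b * x)).comp x ((hasDerivAt_id x).const_mul b)
    refine ((hcosh.rpow_const (Or.inl (cosh_pos _).ne')).div_const (b * (p + 1))).congr_deriv ?_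
    simp only [Function.comp_apply, add_sub_cancel_right]
    field_simp
  have hcont : Continuous fun x => cosh (b * x) ^ p * sinh (b * x) := by
    have hcosh : Continuous fun x => cosh (b * x) := by fun_prop
    exact (hcosh.rpow_const fun x => Or.inl (cosh_pos _).ne').mul (by fun_prop)
  rw [integral_eq_sub_of_hasDerivAt hderiv (hcont.intervalIntegrable _ _)]
  simp only [mul_zero, cosh_zero, one_rpow]
  ring

theorem tendsto_integral_cosh_rpow_mul_sinh_atTop {b p : ℝ} (hb : 0 < b) (hp : -1 < p) :
    Tendsto (fun R => ∫ x in (0:ℝ)..R, cosh (b * x) ^ p * sinh (b * x)) atTop atTop := by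
  simp only [integral_cosh_rpow_mul_sinh hb.ne' hp.ne']
  have hcosh := tendsto_cosh_atTop.comp (tendsto_id.const_mul_atTop hb)
  exact (tendsto_atTop_add_const_right _ _ ((tendsto_rpow_atTop (by linarith)).comp hcosh))
    |>.atTop_div_const (by nlinarith)

theorem tendsto_integral_cosh_rpow_mul_sinh_nhds {b p : ℝ} (hb : 0 < b) (hp : p < -1) :
    Tendsto (fun R => ∫ x in (0:ℝ)..R, cosh (b * x) ^ p * sinh (b * x)) atTop
      (𝓝 (-1 / (b * (p + 1)))) := by
  simp only [integral_cosh_rpow_mul_sinh hb.ne' hp.ne]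
  have hcosh := tendsto_cosh_atTop.comp (tendsto_id.const_mul_atTop hb)
  have hdecay : Tendsto (fun R => cosh (b * R) ^ (p + 1)) atTop (𝓝 0) := by
    simpa [Function.comp_def] using
      (tendsto_rpow_neg_atTop (y := -(p + 1)) (by linarith)).comp hcosh
  simpa using (hdecay.sub_const 1).div_const (b * (p + 1))

end Real

theorem average_energy_density_vanishes_general (a c : ℝ) (ha : 0 < a) :
    Filter.Tendsto (fun R : ℝ =>
      (∫ ρ in (0:ℝ)..R, (c / Real.cosh (3 * a * ρ) ^ 4) *
        (Real.cosh (3 * a * ρ) ^ ((4:ℝ)/3) * Real.sinh (3 * a * ρ))) /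
      (∫ ρ in (0:ℝ)..R,
        Real.cosh (3 * a * ρ) ^ ((4:ℝ)/3) * Real.sinh (3 * a * ρ)))
      Filter.atTop (nhds 0) := by
  have h3a : 0 < 3 * a := by positivity
  have hintegrand : ∀ ρ : ℝ, (c / cosh (3 * a * ρ) ^ 4) *
      (cosh (3 * a * ρ) ^ ((4:ℝ)/3) * sinh (3 * a * ρ)) =
        c * (cosh (3 * a * ρ) ^ ((4:ℝ)/3 - 4) * sinh (3 * a * ρ)) := by
    intro ρ
    rw [rpow_sub (cosh_pos _), rpow_ofNat]
    ring
  simp only [hintegrand, integral_const_mul]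
  have hnum := (tendsto_integral_cosh_rpow_mul_sinh_nhds h3a
    (show (4:ℝ)/3 - 4 < -1 by norm_num)).const_mul c
  exact hnum.div_atTop (tendsto_integral_cosh_rpow_mul_sinh_atTop h3a (by norm_num))

/-- the spatial average of `f(ρ) = c / cosh⁴(3aρ)` over the slice
`t = T` of the non-singular model, with radial volume weight
`cosh^{4/3}(3aρ) sinh(3aρ)`, vanishes. -/
theorem average_energy_density_vanishes (a c : ℝ) (ha : 0 < a) (hc : 0 < c) :
    Filter.Tendsto (fun R : ℝ =>
      (∫ ρ in (0:ℝ)..R, (c / Real.cosh (3 * a * ρ) ^ 4) *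
        (Real.cosh (3 * a * ρ) ^ ((4:ℝ)/3) * Real.sinh (3 * a * ρ))) /
      (∫ ρ in (0:ℝ)..R,
        Real.cosh (3 * a * ρ) ^ ((4:ℝ)/3) * Real.sinh (3 * a * ρ)))
      Filter.atTop (nhds 0) :=
  average_energy_density_vanishes_general a c ha
end

section
/- For a vector field u on a Lorentzian manifold, the Ricci identity contracted twice yields the Raychaudhuri equation: u^ν∇_ν(∇_μ u^μ) + ∇_μ u_ν ∇^ν u^μ - ∇_μ(u^ν∇_ν u^μ) + R_{ρν}u^ρ u^ν = 0. -/
open Finset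

/-- the Raychaudhuri equation as a geometric identity: at any
point, given the first and second covariant derivatives `Du`, `DDu` of a vector
field `u`, the curvature `Riem` (in the form `R^α_{ρμν}`, antisymmetric in its
last two indices) defined by the Ricci identity, the Ricci tensor `Ric` its
trace, and the Leibniz rule for the divergence of the acceleration, one has
`u^ν∇_ν(∇_μu^μ) + ∇_μu_ν∇^νu^μ - ∇_μ(u^ν∇_νu^μ) + R_{ρν}u^ρu^ν = 0`. -/
theorem raychaudhuri_identity {ι : Type*} [Fintype ι]
    (u : ι → ℝ) (Du : ι → ι → ℝ) (DDu : ι → ι → ι → ℝ)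
    (Riem : ι → ι → ι → ι → ℝ) (Ric : ι → ι → ℝ)
    (hRic : ∀ ρ ν, Ric ρ ν = ∑ α, Riem α ρ α ν)
    (hAnti : ∀ α ρ μ ν, Riem α ρ μ ν = - Riem α ρ ν μ)
    (hRicciId : ∀ μ ν α, DDu μ ν α - DDu ν μ α = ∑ ρ, Riem α ρ μ ν * u ρ)
    (divAcc : ℝ)
    (hLeibniz : divAcc = ∑ μ, ∑ ν, (Du μ ν * Du ν μ + u ν * DDu μ ν μ)) :
    (∑ ν, u ν * ∑ μ, DDu ν μ μ) + (∑ μ, ∑ ν, Du μ ν * Du ν μ) - divAcc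
      + (∑ ρ, ∑ ν, Ric ρ ν * u ρ * u ν) = 0 := by
  subst hLeibniz
  simp only [Finset.sum_add_distrib]
  have h1 : (∑ μ, ∑ ν, u ν * DDu μ ν μ) = ∑ ν, u ν * ∑ μ, DDu μ ν μ := by
    rw [Finset.sum_comm]
    simp [Finset.mul_sum]
  rw [h1]
  have h2 : (∑ ν, u ν * ∑ μ, DDu ν μ μ) - (∑ ν, u ν * ∑ μ, DDu μ ν μ)
      = ∑ ν, u ν * ∑ μ, ∑ ρ, Riem μ ρ ν μ * u ρ := by
    rw [← Finset.sum_sub_distrib]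
    refine Finset.sum_congr rfl fun ν _ => ?_
    rw [← mul_sub, ← Finset.sum_sub_distrib]
    congr 1
    exact Finset.sum_congr rfl fun μ _ => hRicciId ν μ μ
  have h3 : (∑ ρ, ∑ ν, Ric ρ ν * u ρ * u ν)
      = - ∑ ν, u ν * ∑ μ, ∑ ρ, Riem μ ρ ν μ * u ρ := by
    simp only [hRic, Finset.sum_mul, Finset.mul_sum, ← Finset.sum_neg_distrib]
    rw [Finset.sum_comm]
    refine Finset.sum_congr rfl fun ν _ => ?_
    rw [Finset.sum_comm]
    refine Finset.sum_congr rfl fun μ _ => ?_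
    refine Finset.sum_congr rfl fun ρ _ => ?_
    rw [hAnti μ ρ μ ν]
    ring
  linarith [h2, h3]
end

section
/- For a > 0 and T ∈ ℝ, the spatial average over the slice t = T of a_μa^μ = 9a²·sinh²(3aρ)/(cosh⁴(aT)·cosh⁴(3aρ)) vanishes: lim_{R→∞} (∫₀^R [sinh²(3aρ)/cosh⁴(3aρ)]·cosh^{4/3}(3aρ)·sinh(3aρ) dρ) / (∫₀^R cosh^{4/3}(3aρ)·sinh(3aρ) dρ) = 0. -/
/-!
The integrand is `g · w` with `g = sinh²/cosh⁴ ≤ 1/cosh² → 0` and the volume weight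
`w = cosh^{4/3} sinh`, whose integral `(cosh^{7/3}(3aR) - 1)/(7a)` diverges. An average of a
function tending to `0` against a weight of infinite total mass tends to `0`: the contribution
of any bounded initial interval is swamped by the growing total mass.
-/

open Real Filter Topology

theorem tendsto_integral_mul_div_integral_of_tendsto_zero {g w : ℝ → ℝ} {b : ℝ}
    (hg : Continuous g) (hw : Continuous w) (hw_nonneg : ∀ x, b ≤ x → 0 ≤ w x)
    (hg_lim : Tendsto g atTop (𝓝 0))
    (hW : Tendsto (fun R => ∫ x in b..R, w x) atTop atTop) :
    Tendsto (fun R => (∫ x in b..R, g x * w x) / ∫ x in b..R, w x) atTop (𝓝 0) := by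
  rw [Metric.tendsto_nhds]
  intro ε hε
  obtain ⟨R₀, hR₀⟩ := eventually_atTop.1 (Metric.tendsto_nhds.1 hg_lim (ε / 2) (half_pos hε))
  set R₁ := max R₀ b
  set C := ∫ x in b..R₁, g x * w x
  filter_upwards [eventually_ge_atTop R₁, hW.eventually_gt_atTop 0,
    hW.eventually_gt_atTop (2 * |C| / ε)] with R hR hW_pos hW_big
  set W := ∫ x in b..R, w x
  have hC : |C| < ε / 2 * W := by
    rw [div_lt_iff₀ hε] at hW_big
    linarith
  have htail : ‖∫ x in R₁..R, g x * w x‖ ≤ ε / 2 * W := by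
    have hhead : 0 ≤ ∫ x in b..R₁, w x :=
      intervalIntegral.integral_nonneg (le_max_right _ _) fun x hx => hw_nonneg x hx.1
    calc ‖∫ x in R₁..R, g x * w x‖ ≤ ∫ x in R₁..R, ε / 2 * w x :=
          intervalIntegral.norm_integral_le_of_norm_le hR (Eventually.of_forall fun x hx => ?_)
            ((hw.const_mul _).intervalIntegrable _ _)
      _ = ε / 2 * ∫ x in R₁..R, w x := intervalIntegral.integral_const_mul _ _
      _ ≤ ε / 2 * ((∫ x in b..R₁, w x) + ∫ x in R₁..R, w x) := by gcongr; linarith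
      _ = ε / 2 * W := by
        rw [intervalIntegral.integral_add_adjacent_intervals
          (hw.intervalIntegrable _ _) (hw.intervalIntegrable _ _)]
    have hxb : b ≤ x := le_of_max_le_right hx.1.le
    have hgx : |g x| < ε / 2 := by simpa using hR₀ x (le_of_max_le_left hx.1.le)
    rw [Real.norm_eq_abs, abs_mul, abs_of_nonneg (hw_nonneg x hxb)]
    exact mul_le_mul_of_nonneg_right hgx.le (hw_nonneg x hxb)
  have hgw : Continuous fun x => g x * w x := hg.mul hw
  rw [← intervalIntegral.integral_add_adjacent_intervals (hgw.intervalIntegrable b R₁)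
    (hgw.intervalIntegrable R₁ R), Real.dist_eq, sub_zero, abs_div, abs_of_pos hW_pos,
    div_lt_iff₀ hW_pos]
  calc |C + ∫ x in R₁..R, g x * w x| ≤ |C| + ‖∫ x in R₁..R, g x * w x‖ := abs_add_le _ _
    _ < ε / 2 * W + ε / 2 * W := add_lt_add_of_lt_of_le hC htail
    _ = ε * W := by ring

theorem Real.tendsto_cosh_atTop_s16 : Tendsto cosh atTop atTop := by
  refine tendsto_atTop_mono (fun x => ?_) (tendsto_exp_atTop.atTop_div_const two_pos)
  rw [cosh_eq]
  linarith [exp_pos (-x)]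

theorem Real.tendsto_sinh_sq_div_cosh_pow_four_atTop :
    Tendsto (fun x => sinh x ^ 2 / cosh x ^ 4) atTop (𝓝 0) := by
  refine tendsto_of_tendsto_of_tendsto_of_le_of_le tendsto_const_nhds
    ((tendsto_pow_atTop two_ne_zero).comp tendsto_cosh_atTop_s16).inv_tendsto_atTop
    (fun x => by positivity) fun x => ?_
  change _ ≤ (cosh x ^ 2)⁻¹
  rw [div_le_iff₀ (by positivity), sinh_sq]
  field_simp
  linarith

theorem Real.continuous_cosh_rpow_mul_sinh (c p : ℝ) :
    Continuous fun x => cosh (c * x) ^ p * sinh (c * x) :=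
  ((continuous_cosh.comp (continuous_const_mul c)).rpow_const
    fun _ => Or.inl (cosh_pos _).ne').mul (continuous_sinh.comp (continuous_const_mul c))

theorem Real.integral_cosh_rpow_mul_sinh_s16 {c p : ℝ} (hc : c ≠ 0) (hp : p + 1 ≠ 0) (R : ℝ) :
    ∫ x in (0 : ℝ)..R, cosh (c * x) ^ p * sinh (c * x) =
      (cosh (c * R) ^ (p + 1) - 1) / (c * (p + 1)) := by
  have hderiv : ∀ x, HasDerivAt (fun x => cosh (c * x) ^ (p + 1) / (c * (p + 1)))
      (cosh (c * x) ^ p * sinh (c * x)) x := by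
    intro x
    have hcosh := ((hasDerivAt_id' x).const_mul c).cosh
    refine ((hcosh.rpow_const (p := p + 1) (Or.inl (cosh_pos _).ne')).div_const
      (c * (p + 1))).congr_deriv ?_
    rw [add_sub_cancel_right]
    field_simp
  rw [intervalIntegral.integral_eq_sub_of_hasDerivAt (fun x _ => hderiv x)
    ((continuous_cosh_rpow_mul_sinh c p).intervalIntegrable _ _)]
  simp [sub_div]

theorem Real.tendsto_integral_cosh_rpow_mul_sinh_atTop_s16 {c p : ℝ} (hc : 0 < c) (hp : -1 < p) :
    Tendsto (fun R => ∫ x in (0 : ℝ)..R, cosh (c * x) ^ p * sinh (c * x)) atTop atTop := by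
  simp_rw [integral_cosh_rpow_mul_sinh_s16 hc.ne' (by linarith : p + 1 ≠ 0)]
  refine Tendsto.atTop_div_const (by nlinarith) (tendsto_atTop_add_const_right _ _ ?_)
  exact (tendsto_rpow_atTop (by linarith)).comp
    (tendsto_cosh_atTop_s16.comp (tendsto_id.const_mul_atTop hc))

theorem average_acceleration_squared_vanishes_general (a : ℝ) (ha : 0 < a) :
    Filter.Tendsto (fun R : ℝ =>
      (∫ ρ in (0:ℝ)..R, (Real.sinh (3 * a * ρ) ^ 2 / Real.cosh (3 * a * ρ) ^ 4) *
        (Real.cosh (3 * a * ρ) ^ ((4:ℝ)/3) * Real.sinh (3 * a * ρ))) /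
      (∫ ρ in (0:ℝ)..R,
        Real.cosh (3 * a * ρ) ^ ((4:ℝ)/3) * Real.sinh (3 * a * ρ)))
      Filter.atTop (nhds 0) := by
  refine tendsto_integral_mul_div_integral_of_tendsto_zero (b := 0) ?_
    (continuous_cosh_rpow_mul_sinh _ _) (fun ρ hρ => ?_)
    (tendsto_sinh_sq_div_cosh_pow_four_atTop.comp (tendsto_id.const_mul_atTop (by positivity)))
    (tendsto_integral_cosh_rpow_mul_sinh_atTop_s16 (by positivity) (by norm_num))
  · fun_prop (disch := exact fun _ => by positivity)
  · exact mul_nonneg (rpow_nonneg (cosh_pos _).le _) (sinh_nonneg_iff.2 (by positivity))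

/-- the spatial average of `a_μa^μ ∝ sinh²(3aρ)/cosh⁴(3aρ)` over
the slice `t = T`, with radial volume weight `cosh^{4/3}(3aρ) sinh(3aρ)`,
vanishes. -/
theorem average_acceleration_squared_vanishes (a T : ℝ) (ha : 0 < a) :
    Filter.Tendsto (fun R : ℝ =>
      (∫ ρ in (0:ℝ)..R, (Real.sinh (3 * a * ρ) ^ 2 / Real.cosh (3 * a * ρ) ^ 4) *
        (Real.cosh (3 * a * ρ) ^ ((4:ℝ)/3) * Real.sinh (3 * a * ρ))) /
      (∫ ρ in (0:ℝ)..R,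
        Real.cosh (3 * a * ρ) ^ ((4:ℝ)/3) * Real.sinh (3 * a * ρ)))
      Filter.atTop (nhds 0) :=
  average_acceleration_squared_vanishes_general a ha
end
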